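/- Let k_1,…,k_r: ℝ^d × ℝ^d → ℝ be twice continuously differentiable and k = ∏_{i=1}^r k_i. Then G[k] = ∑_{i=1}^r p_i·G[k_i] + J_x[k]ᵀ P J_y[k], where p_i = ∏_{j≠i} k_j, J_x[k] is the r×d Jacobian whose i-th row is (∇_x k_i)ᵀ, similarly J_y[k], and P ∈ ℝ^{r×r} has entries P_{ij} = ∏_{t≠i,j} k_t for i≠j and P_{ii} = 0. -/

import Mathlib

open Matrix BigOperators

/-- Partial derivative of `f` with respect to the `i`-th coordinate at `x`. -/
noncomputable def pd {n : ℕ} (i : Fin n) (f : (Fin n → ℝ) → ℝ) (x : Fin n → ℝ) : ℝ :=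
  deriv (fun t : ℝ => f (x + t • (Pi.single i 1 : Fin n → ℝ))) 0

/-- The matrix `G[k](x,y)` with entries `∂_{x_i} ∂_{y_j} k (x, y)`. -/
noncomputable def Gmat {n : ℕ} (k : (Fin n → ℝ) → (Fin n → ℝ) → ℝ) (x y : Fin n → ℝ) :
    Matrix (Fin n) (Fin n) ℝ :=
  Matrix.of fun i j => pd i (fun x' => pd j (fun y' => k x' y') y) x

/-- Gradient of `k` with respect to the first argument. -/
noncomputable def gradx {n : ℕ} (k : (Fin n → ℝ) → (Fin n → ℝ) → ℝ) (x y : Fin n → ℝ) :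
    Fin n → ℝ :=
  fun i => pd i (fun x' => k x' y) x

/-- Gradient of `k` with respect to the second argument. -/
noncomputable def grady {n : ℕ} (k : (Fin n → ℝ) → (Fin n → ℝ) → ℝ) (x y : Fin n → ℝ) :
    Fin n → ℝ :=
  fun j => pd j (fun y' => k x y') y

/-!
Two applications of the product rule. In `y`, `∂_{y_j} ∏ₜ kₜ = ∑ₜ pₜ ∂_{y_j} kₜ`. In `x`, each
term gives `∂_{x_i} pₜ · ∂_{y_j} kₜ + pₜ ∂_{x_i} ∂_{y_j} kₜ`, and
`∂_{x_i} pₜ = ∑_{u ≠ t} P_{ut} ∂_{x_i} k_u`, so the first parts sum to `(J_xᵀ P J_y)_{ij}`.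
Since `kₜ` is `C²`, `∂_{y_j} kₜ` is the `C¹` function `x ↦ Dkₜ(x, y)(0, e_j)`, which
justifies the second product rule.
-/

open Finset

section PartialDerivative

variable {n : ℕ} {f : (Fin n → ℝ) → ℝ} {f' : (Fin n → ℝ) →L[ℝ] ℝ} {x : Fin n → ℝ}

theorem HasFDerivAt.pd_eq (hf : HasFDerivAt f f' x) (i : Fin n) :
    pd i f x = f' (Pi.single i 1) := by
  rw [← hf.fderiv]
  exact hf.differentiableAt.lineDeriv_eq_fderiv

theorem pd_eq_fderiv (hf : DifferentiableAt ℝ f x) (i : Fin n) :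
    pd i f x = fderiv ℝ f x (Pi.single i 1) :=
  hf.hasFDerivAt.pd_eq i

theorem pd_finsetProd {ι : Type*} [DecidableEq ι] (s : Finset ι) {g : ι → (Fin n → ℝ) → ℝ}
    (hg : ∀ t ∈ s, DifferentiableAt ℝ (g t) x) (i : Fin n) :
    pd i (fun x' => ∏ t ∈ s, g t x') x = ∑ t ∈ s, (∏ u ∈ s.erase t, g u x) * pd i (g t) x := by
  rw [(HasFDerivAt.finsetProd fun t ht => (hg t ht).hasFDerivAt).pd_eq i]
  simp only [_root_.sum_apply, _root_.smul_apply, smul_eq_mul]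
  exact sum_congr rfl fun t ht => by rw [pd_eq_fderiv (hg t ht)]

theorem pd_sum_mul {ι : Type*} (s : Finset ι) {g h : ι → (Fin n → ℝ) → ℝ}
    (hg : ∀ t ∈ s, DifferentiableAt ℝ (g t) x) (hh : ∀ t ∈ s, DifferentiableAt ℝ (h t) x)
    (i : Fin n) :
    pd i (fun x' => ∑ t ∈ s, g t x' * h t x') x
      = ∑ t ∈ s, (pd i (g t) x * h t x + g t x * pd i (h t) x) := by
  rw [(HasFDerivAt.fun_sum (A := fun t x' => g t x' * h t x') fun t ht =>
    (hg t ht).hasFDerivAt.mul (hh t ht).hasFDerivAt).pd_eq i]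
  simp only [_root_.sum_apply, _root_.add_apply, _root_.smul_apply, smul_eq_mul]
  exact sum_congr rfl fun t ht => by
    rw [pd_eq_fderiv (hg t ht), pd_eq_fderiv (hh t ht)]; ring

end PartialDerivative

section Uncurried

variable {n : ℕ} {K : (Fin n → ℝ) × (Fin n → ℝ) → ℝ} {x y : Fin n → ℝ}

theorem pd_snd_eq_fderiv (hK : DifferentiableAt ℝ K (x, y)) (j : Fin n) :
    pd j (fun y' => K (x, y')) y = fderiv ℝ K (x, y) (0, Pi.single j 1) := by
  rw [← hK.lineDeriv_eq_fderiv]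
  unfold pd lineDeriv
  simp

theorem differentiable_pd_snd (hK : ContDiff ℝ 2 K) (j : Fin n) (y : Fin n → ℝ) :
    Differentiable ℝ fun x' => pd j (fun y' => K (x', y')) y := by
  have hK' : ContDiff ℝ 1 (fderiv ℝ K) := hK.fderiv_right (by norm_num)
  simp_rw [pd_snd_eq_fderiv (hK.differentiable two_ne_zero _) j]
  fun_prop

end Uncurried

theorem sum_erase_eq_sum_ite {ι M : Type*} [DecidableEq ι] [AddCommMonoid M] (s : Finset ι)
    (t : ι) (f : ι → M) :
    ∑ u ∈ s.erase t, f u = ∑ u ∈ s, if u = t then 0 else f u := by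
  rw [← filter_ne', sum_filter]
  exact sum_congr rfl fun u _ => by split_ifs <;> simp_all

theorem transpose_mul_offDiagProd_mul_apply {ι m R : Type*} [Fintype ι] [DecidableEq ι]
    [CommSemiring R] (c : ι → R) (A B : Matrix ι m R) (i j : m) :
    (Aᵀ * (of fun u t => if u = t then 0 else ∏ v ∈ (univ.erase u).erase t, c v) * B) i j
      = ∑ t, (∑ u ∈ univ.erase t, (∏ v ∈ (univ.erase t).erase u, c v) * A u i) * B t j := by
  simp only [mul_apply, transpose_apply, of_apply]
  refine sum_congr rfl fun t _ => congrArg (· * B t j) ?_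
  rw [sum_erase_eq_sum_ite]
  refine sum_congr rfl fun u _ => ?_
  split_ifs <;> simp only [mul_zero, erase_right_comm, mul_comm]

theorem G_product_rule_r (d r : ℕ) (k : Fin r → (Fin d → ℝ) → (Fin d → ℝ) → ℝ)
    (hk : ∀ i, ContDiff ℝ 2 (fun p : (Fin d → ℝ) × (Fin d → ℝ) => k i p.1 p.2))
    (x y : Fin d → ℝ) :
    Gmat (fun x y => ∏ i, k i x y) x y
      = (∑ i, (∏ j ∈ Finset.univ.erase i, k j x y) • Gmat (k i) x y)
        + (Matrix.of fun (i : Fin r) (l : Fin d) => gradx (k i) x y l)ᵀ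
          * (Matrix.of fun i j =>
              if i = j then (0 : ℝ)
              else ∏ t ∈ (Finset.univ.erase i).erase j, k t x y)
          * (Matrix.of fun (i : Fin r) (l : Fin d) => grady (k i) x y l) := by
  have hK : ∀ t, Differentiable ℝ (fun p : (Fin d → ℝ) × (Fin d → ℝ) => k t p.1 p.2) :=
    fun t => (hk t).differentiable two_ne_zero
  have hx : ∀ t x' y', DifferentiableAt ℝ (fun x' => k t x' y') x' := fun t x' y' =>
    (hK t).differentiableAt.comp x' (differentiableAt_id.prodMk (differentiableAt_const y'))
  have hy : ∀ t x' y', DifferentiableAt ℝ (fun y' => k t x' y') y' := fun t x' y' =>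
    (hK t).differentiableAt.comp y' ((differentiableAt_const x').prodMk differentiableAt_id)
  ext i j
  have partial_y : (fun x' => pd j (fun y' => ∏ t, k t x' y') y)
      = fun x' => ∑ t, (∏ u ∈ univ.erase t, k u x' y) * pd j (fun y' => k t x' y') y :=
    funext fun x' => pd_finsetProd univ (fun t _ => hy t x' y) j
  have mixed_partial : Gmat (fun x y => ∏ t, k t x y) x y i j
      = ∑ t, ((∑ u ∈ univ.erase t, (∏ v ∈ (univ.erase t).erase u, k v x y) * gradx (k u) x y i)
          * grady (k t) x y j + (∏ u ∈ univ.erase t, k u x y) * Gmat (k t) x y i j) := by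
    rw [Gmat, of_apply, partial_y, pd_sum_mul univ
      (fun t _ => (HasFDerivAt.finsetProd fun u _ => (hx u x y).hasFDerivAt).differentiableAt)
      (fun t _ => (differentiable_pd_snd (hk t) j y).differentiableAt) i]
    exact sum_congr rfl fun t _ => by
      rw [pd_finsetProd _ (fun u _ => hx u x y)]; rfl
  simp only [mixed_partial, Matrix.add_apply, transpose_mul_offDiagProd_mul_apply, of_apply,
    Matrix.sum_apply, Matrix.smul_apply, smul_eq_mul, ← sum_add_distrib]
  exact sum_congr rfl fun t _ => add_comm _ _
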